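/- arXiv:1201.2999 — 2 statements merged into one kernel-verified Lean document; each statement's English description precedes it below -/
import Mathlib

section
/- For all x in [0, 1/2], the binary entropy function satisfies h2(x) <= 2*sqrt(x*(1-x)). -/
/-!
In nats the claim reads `g x ≥ 0` for `g x = 2 log 2 √(x(1-x)) - binEntropy x`. With
`s = √(x(1-x))` one finds `g'' = (2s - log 2) / (2s³)`, which changes sign exactly once on
`(0, 1/2)`, at the point `x₀` where `2s = log 2`. So `g` is concave on `[0, x₀]` and convex on
`[x₀, 1/2]`. Since `g (1/2) = g' (1/2) = 0`, convexity gives `g ≥ 0` on `[x₀, 1/2]`; since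
`g 0 = 0`, concavity then gives `g ≥ 0` on `[0, x₀]`.
-/

/-- The binary entropy function `h2(x) = -x log2 x - (1-x) log2 (1-x)`. -/
noncomputable def h2 (x : ℝ) : ℝ := -(x * Real.logb 2 x) - (1 - x) * Real.logb 2 (1 - x)

open Real Set

lemma h2_eq_binEntropy_div_log_two (x : ℝ) : h2 x = binEntropy x / log 2 := by
  rw [h2, binEntropy, logb, logb, log_inv, log_inv]
  ring

lemma nonneg_of_concaveOn_of_convexOn {f : ℝ → ℝ} {a m b x : ℝ} (hmb : m ≤ b)
    (hconcave : ConcaveOn ℝ (Icc a m) f) (hconvex : ConvexOn ℝ (Icc m b) f)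
    (ha : 0 ≤ f a) (hb : f b = 0) (hb' : HasDerivAt f 0 b) (hx : x ∈ Icc a b) : 0 ≤ f x := by
  have nonneg_right : ∀ y ∈ Icc m b, 0 ≤ f y := by
    rintro y ⟨hmy, hyb⟩
    rcases hyb.lt_or_eq with hyb | rfl
    · have hslope := hconvex.slope_le_of_hasDerivAt ⟨hmy, hyb.le⟩ ⟨hmb, le_rfl⟩ hyb hb'
      rw [slope_def_field, hb, div_le_iff₀ (sub_pos.2 hyb)] at hslope
      linarith
    · exact hb.ge
  rcases le_total x m with hxm | hmx
  · calc 0 ≤ min (f a) (f m) := le_min ha (nonneg_right m ⟨le_rfl, hmb⟩)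
      _ ≤ f x := hconcave.ge_on_segment ⟨le_rfl, hx.1.trans hxm⟩ ⟨hx.1.trans hxm, le_rfl⟩
          (by rw [segment_eq_Icc (hx.1.trans hxm)]; exact ⟨hx.1, hxm⟩)
  · exact nonneg_right x ⟨hmx, hx.2⟩

lemma hasDerivAt_sqrt_mul_one_sub {x : ℝ} (hx₀ : x ≠ 0) (hx₁ : x ≠ 1) :
    HasDerivAt (fun y => √(y * (1 - y))) ((1 - 2 * x) / (2 * √(x * (1 - x)))) x := by
  have hu : HasDerivAt (fun y : ℝ => y * (1 - y)) (1 - 2 * x) x :=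
    ((hasDerivAt_id x).mul ((hasDerivAt_id x).const_sub 1)).congr_deriv (by simp; ring)
  exact hu.sqrt (mul_ne_zero hx₀ (sub_ne_zero.2 (Ne.symm hx₁)))

lemma sqrt_mul_one_sub_le_sqrt_mul_one_sub {x y : ℝ} (hxy : x ≤ y) (hsum : x + y ≤ 1) :
    √(x * (1 - x)) ≤ √(y * (1 - y)) :=
  sqrt_le_sqrt (by nlinarith)

lemma exists_two_mul_sqrt_mul_one_sub_eq_log_two :
    ∃ x₀ : ℝ, 0 < x₀ ∧ x₀ < 1 / 2 ∧ 2 * √(x₀ * (1 - x₀)) = log 2 := by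
  have hlog_pos : 0 < log 2 := log_pos one_lt_two
  have hlog_lt_one : log 2 < 1 := by linarith [log_two_lt_d9]
  set r := √(1 - log 2 ^ 2)
  have hr_sq : r ^ 2 = 1 - log 2 ^ 2 := sq_sqrt (by nlinarith)
  have hr_pos : 0 < r := sqrt_pos.2 (by nlinarith)
  have hr_lt_one : r < 1 := by nlinarith
  refine ⟨(1 - r) / 2, by linarith, by linarith, ?_⟩
  rw [show (1 - r) / 2 * (1 - (1 - r) / 2) = (log 2 / 2) ^ 2 by nlinarith, sqrt_sq (by positivity)]
  ring

noncomputable def entropyGap (x : ℝ) : ℝ := 2 * log 2 * √(x * (1 - x)) - binEntropy x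

noncomputable def entropyGapDeriv (x : ℝ) : ℝ :=
  log 2 * (1 - 2 * x) / √(x * (1 - x)) - (log (1 - x) - log x)

noncomputable def entropyGapDeriv2 (x : ℝ) : ℝ :=
  (2 * √(x * (1 - x)) - log 2) / (2 * √(x * (1 - x)) ^ 3)

lemma continuous_entropyGap : Continuous entropyGap := by
  unfold entropyGap; fun_prop

lemma entropyGap_zero : entropyGap 0 = 0 := by
  simp [entropyGap]

lemma entropyGap_half : entropyGap (1 / 2) = 0 := by
  rw [entropyGap, one_div, binEntropy_two_inv, show (2⁻¹ : ℝ) * (1 - 2⁻¹) = 2⁻¹ ^ 2 by norm_num,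
    sqrt_sq (by norm_num)]
  ring

lemma entropyGapDeriv_half : entropyGapDeriv (1 / 2) = 0 := by
  norm_num [entropyGapDeriv]

lemma hasDerivAt_entropyGap {x : ℝ} (hx₀ : x ≠ 0) (hx₁ : x ≠ 1) :
    HasDerivAt entropyGap (entropyGapDeriv x) x := by
  refine (((hasDerivAt_sqrt_mul_one_sub hx₀ hx₁).const_mul (2 * log 2)).sub
    (hasDerivAt_binEntropy hx₀ hx₁)).congr_deriv ?_
  rw [entropyGapDeriv]
  field_simp

lemma hasDerivAt_entropyGapDeriv {x : ℝ} (hx₀ : 0 < x) (hx₁ : x < 1) :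
    HasDerivAt entropyGapDeriv (entropyGapDeriv2 x) x := by
  have hu : 0 < x * (1 - x) := mul_pos hx₀ (sub_pos.2 hx₁)
  have hs : 0 < √(x * (1 - x)) := sqrt_pos.2 hu
  have hs_sq : √(x * (1 - x)) ^ 2 = x * (1 - x) := sq_sqrt hu.le
  have hlin : HasDerivAt (fun y : ℝ => log 2 * (1 - 2 * y)) (-2 * log 2) x :=
    (((hasDerivAt_id x).const_mul 2).const_sub 1).const_mul (log 2) |>.congr_deriv (by simp; ring)
  have hlog₁ : HasDerivAt (fun y : ℝ => log (1 - y)) (-1 / (1 - x)) x :=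
    ((hasDerivAt_id x).const_sub 1).log (sub_pos.2 hx₁).ne' |>.congr_deriv (by simp)
  refine ((hlin.div (hasDerivAt_sqrt_mul_one_sub hx₀.ne' hx₁.ne) hs.ne').sub
    (hlog₁.sub (hasDerivAt_log hx₀.ne'))).congr_deriv ?_
  have h1x : 1 - x ≠ 0 := (sub_pos.2 hx₁).ne'
  rw [entropyGapDeriv2]
  field_simp
  -- `4x(1-x) + (1-2x)² = 1` is what collapses the second derivative
  linear_combination (2 * √(x * (1 - x)) - 4 * log 2 * (x * (1 - x))) * hs_sq

lemma entropyGapDeriv2_nonpos {x : ℝ} (hx : 2 * √(x * (1 - x)) ≤ log 2) :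
    entropyGapDeriv2 x ≤ 0 :=
  div_nonpos_of_nonpos_of_nonneg (by linarith) (by positivity)

lemma entropyGapDeriv2_nonneg {x : ℝ} (hx : log 2 ≤ 2 * √(x * (1 - x))) :
    0 ≤ entropyGapDeriv2 x :=
  div_nonneg (by linarith) (by positivity)

lemma concaveOn_entropyGap {x₀ : ℝ} (hx₀ : x₀ ≤ 1 / 2) (hx₀_log : 2 * √(x₀ * (1 - x₀)) ≤ log 2) :
    ConcaveOn ℝ (Icc 0 x₀) entropyGap := by
  refine concaveOn_of_hasDerivWithinAt2_nonpos (f' := entropyGapDeriv)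
    (f'' := entropyGapDeriv2) (convex_Icc 0 x₀) continuous_entropyGap.continuousOn
    (fun x hx => ?_) (fun x hx => ?_) (fun x hx => ?_) <;>
    obtain ⟨hx_pos, hx_lt⟩ : 0 < x ∧ x < x₀ := by rwa [interior_Icc] at hx
  · exact (hasDerivAt_entropyGap hx_pos.ne' (by linarith)).hasDerivWithinAt
  · exact (hasDerivAt_entropyGapDeriv hx_pos (by linarith)).hasDerivWithinAt
  · refine entropyGapDeriv2_nonpos (le_trans ?_ hx₀_log)
    gcongr 2 * ?_
    exact sqrt_mul_one_sub_le_sqrt_mul_one_sub hx_lt.le (by linarith)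

lemma convexOn_entropyGap {x₀ : ℝ} (hx₀ : 0 < x₀) (hx₀_log : log 2 ≤ 2 * √(x₀ * (1 - x₀))) :
    ConvexOn ℝ (Icc x₀ (1 / 2)) entropyGap := by
  refine convexOn_of_hasDerivWithinAt2_nonneg (f' := entropyGapDeriv)
    (f'' := entropyGapDeriv2) (convex_Icc x₀ _) continuous_entropyGap.continuousOn
    (fun x hx => ?_) (fun x hx => ?_) (fun x hx => ?_) <;>
    obtain ⟨hx_gt, hx_lt⟩ : x₀ < x ∧ x < 1 / 2 := by rwa [interior_Icc] at hx
  · exact (hasDerivAt_entropyGap (by linarith) (by linarith)).hasDerivWithinAt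
  · exact (hasDerivAt_entropyGapDeriv (by linarith) (by linarith)).hasDerivWithinAt
  · refine entropyGapDeriv2_nonneg (hx₀_log.trans ?_)
    gcongr 2 * ?_
    exact sqrt_mul_one_sub_le_sqrt_mul_one_sub hx_gt.le (by linarith)

lemma entropyGap_nonneg {x : ℝ} (hx : x ∈ Icc (0 : ℝ) (1 / 2)) : 0 ≤ entropyGap x := by
  obtain ⟨x₀, hx₀_pos, hx₀_lt, hx₀_log⟩ := exists_two_mul_sqrt_mul_one_sub_eq_log_two
  have hderiv_half : HasDerivAt entropyGap 0 (1 / 2) :=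
    entropyGapDeriv_half ▸ hasDerivAt_entropyGap (by norm_num) (by norm_num)
  exact nonneg_of_concaveOn_of_convexOn hx₀_lt.le (concaveOn_entropyGap hx₀_lt.le hx₀_log.le)
    (convexOn_entropyGap hx₀_pos hx₀_log.ge) entropyGap_zero.ge entropyGap_half hderiv_half hx

/-- For all `x ∈ [0, 1/2]`, the binary entropy satisfies `h2(x) ≤ 2√(x(1-x))`. -/
theorem binary_entropy_upper_bound_sqrt :
    ∀ x ∈ Set.Icc (0:ℝ) (1/2), h2 x ≤ 2 * Real.sqrt (x * (1 - x)) := by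
  intro x hx
  have hgap := entropyGap_nonneg hx
  rw [entropyGap] at hgap
  rw [h2_eq_binEntropy_div_log_two, div_le_iff₀ (log_pos one_lt_two)]
  linarith
end

section
/- Let mu, nu be probability measures on [0,1]. Then |B(mu) - B(nu)| <= sqrt(d(mu,nu)) * sqrt(2 - d(mu,nu)), where B(a) = integral of sqrt(1-z^2) da(z) is the Battacharyya functional and d is the Wasserstein-1 distance (L1 distance of CDFs). -/
/-!
Writing `√(1 - z²) = ∫_z^1 w` with `w x = x / √(1 - x²)` and exchanging the order of integration
gives `B(μ) = ∫₀¹ F_μ w`, hence `|B(μ) - B(ν)| ≤ ∫₀¹ |F_μ - F_ν| w`. The weight `w` is increasing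
and `0 ≤ |F_μ - F_ν| ≤ 1` has integral `d`, so among all such functions the last integral is
largest for the indicator of `[1 - d, 1]`; it is therefore at most
`∫_{1-d}^1 w = √(1 - (1 - d)²) = √d · √(2 - d)`.
-/

open MeasureTheory

/-- Cumulative distribution function of a measure on `ℝ`. -/
noncomputable def cdf (μ : Measure ℝ) (x : ℝ) : ℝ := (μ (Set.Iic x)).toReal

/-- The Wasserstein-1 distance between measures on `[0,1]`,
expressed as the `L¹` distance of their CDFs. -/
noncomputable def W1 (μ ν : Measure ℝ) : ℝ := ∫ x in (0:ℝ)..1, |cdf μ x - cdf ν x|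

/-- The Battacharyya functional of a `|D|`-distribution. -/
noncomputable def batta (μ : Measure ℝ) : ℝ := ∫ z, Real.sqrt (1 - z^2) ∂μ

open Set

theorem IntervalIntegrable.bdd_mul {f g : ℝ → ℝ} {μ : Measure ℝ} {a b c : ℝ}
    (hg : IntervalIntegrable g μ a b) (hf : IntervalIntegrable f μ a b)
    (hf_bound : ∀ x, ‖f x‖ ≤ c) : IntervalIntegrable (fun x ↦ f x * g x) μ a b :=
  ⟨hg.1.bdd_mul hf.1.1 (ae_of_all _ hf_bound), hg.2.bdd_mul hf.2.1 (ae_of_all _ hf_bound)⟩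

theorem integral_mul_le_integral_of_monotoneOn {w g : ℝ → ℝ} {a b c : ℝ} (hac : a ≤ c)
    (hcb : c ≤ b) (hw : MonotoneOn w (Ico a b)) (hwi : IntervalIntegrable w volume a b)
    (hgi : IntervalIntegrable g volume a b) (hg : ∀ x, g x ∈ Icc 0 1)
    (hg_int : ∫ x in a..b, g x = b - c) :
    ∫ x in a..b, g x * w x ≤ ∫ x in c..b, w x := by
  have hab := hac.trans hcb
  have hgw : IntervalIntegrable (fun x ↦ g x * w x) volume a b :=
    hwi.bdd_mul hgi fun x ↦ by rw [Real.norm_of_nonneg (hg x).1]; exact (hg x).2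
  have hc : c ∈ uIcc a b := mem_uIcc_of_le hac hcb
  have hac' : uIcc a c ⊆ uIcc a b := uIcc_subset_uIcc left_mem_uIcc hc
  have hcb' : uIcc c b ⊆ uIcc a b := uIcc_subset_uIcc hc right_mem_uIcc
  rcases hcb.eq_or_lt with rfl | hcb
  · have hg0 : g =ᵐ[volume.restrict (Ioc a c)] 0 :=
      (intervalIntegral.integral_eq_zero_iff_of_le_of_nonneg_ae hab
        (ae_of_all _ fun x ↦ (hg x).1) hgi).1 (by simpa using hg_int)
    rw [intervalIntegral.integral_same, intervalIntegral.integral_of_le hab]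
    exact (integral_eq_zero_of_ae (hg0.mono fun x hx ↦ by simp [hx])).le
  -- Compare with the constant weight `w c` on both sides of `c`; the two resulting
  -- `w c`-terms cancel because `∫ g = b - c`.
  have hwc (x : ℝ) (hx : x ∈ Ioo a c) : g x * w x ≤ g x * w c :=
    mul_le_mul_of_nonneg_left (hw ⟨hx.1.le, hx.2.trans hcb⟩ ⟨hac, hcb⟩ hx.2.le) (hg x).1
  have hcw (x : ℝ) (hx : x ∈ Ioo c b) : (1 - g x) * w c ≤ (1 - g x) * w x :=
    mul_le_mul_of_nonneg_left (hw ⟨hac, hcb⟩ ⟨hac.trans hx.1.le, hx.2⟩ hx.1.le)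
      (sub_nonneg.2 (hg x).2)
  have h_left := intervalIntegral.integral_mono_on_of_le_Ioo hac (hgw.mono_set hac')
    ((hgi.mono_set hac').mul_const (w c)) hwc
  have h_right := intervalIntegral.integral_mono_on_of_le_Ioo hcb.le
    ((intervalIntegrable_const.sub (hgi.mono_set hcb')).mul_const (w c))
    (by simpa only [sub_mul, one_mul] using (hwi.mono_set hcb').sub (hgw.mono_set hcb')) hcw
  rw [intervalIntegral.integral_mul_const] at h_left
  rw [intervalIntegral.integral_mul_const, intervalIntegral.integral_sub intervalIntegrable_const
    (hgi.mono_set hcb'), intervalIntegral.integral_const, smul_eq_mul, mul_one] at h_right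
  simp only [sub_mul, one_mul] at h_right
  rw [intervalIntegral.integral_sub (hwi.mono_set hcb') (hgw.mono_set hcb')] at h_right
  rw [← intervalIntegral.integral_add_adjacent_intervals (hgi.mono_set hac') (hgi.mono_set hcb')]
    at hg_int
  rw [← intervalIntegral.integral_add_adjacent_intervals (hgw.mono_set hac') (hgw.mono_set hcb')]
  linear_combination h_left + h_right + w c * hg_int

theorem monotone_cdf (μ : Measure ℝ) [IsFiniteMeasure μ] : Monotone (cdf μ) :=
  fun _ _ h ↦ measureReal_mono (Iic_subset_Iic.2 h)

theorem cdf_mem_Icc (μ : Measure ℝ) [IsProbabilityMeasure μ] (x : ℝ) : cdf μ x ∈ Icc 0 1 :=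
  ⟨measureReal_nonneg, measureReal_le_one⟩

theorem abs_sub_cdf_mem_Icc (μ ν : Measure ℝ) [IsProbabilityMeasure μ] [IsProbabilityMeasure ν]
    (x : ℝ) : |cdf μ x - cdf ν x| ∈ Icc 0 1 := by
  have hμ := cdf_mem_Icc μ x
  have hν := cdf_mem_Icc ν x
  exact ⟨abs_nonneg _, abs_sub_le_iff.2 ⟨by linarith [hμ.2, hν.1], by linarith [hμ.1, hν.2]⟩⟩

theorem intervalIntegrable_abs_sub_cdf (μ ν : Measure ℝ) [IsFiniteMeasure μ] [IsFiniteMeasure ν]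
    (a b : ℝ) : IntervalIntegrable (fun x ↦ |cdf μ x - cdf ν x|) volume a b :=
  ((monotone_cdf μ).intervalIntegrable.sub (monotone_cdf ν).intervalIntegrable).abs

theorem IntervalIntegrable.cdf_mul {w : ℝ → ℝ} {a b : ℝ} (hw : IntervalIntegrable w volume a b)
    (μ : Measure ℝ) [IsProbabilityMeasure μ] :
    IntervalIntegrable (fun x ↦ cdf μ x * w x) volume a b :=
  hw.bdd_mul (monotone_cdf μ).intervalIntegrable fun x ↦ by
    rw [Real.norm_of_nonneg (cdf_mem_Icc μ x).1]; exact (cdf_mem_Icc μ x).2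

theorem W1_nonneg (μ ν : Measure ℝ) : 0 ≤ W1 μ ν :=
  intervalIntegral.integral_nonneg zero_le_one fun _ _ ↦ abs_nonneg _

theorem W1_le_one (μ ν : Measure ℝ) [IsProbabilityMeasure μ] [IsProbabilityMeasure ν] :
    W1 μ ν ≤ 1 :=
  calc W1 μ ν ≤ ∫ _ in (0 : ℝ)..1, (1 : ℝ) :=
        intervalIntegral.integral_mono_on zero_le_one (intervalIntegrable_abs_sub_cdf μ ν 0 1)
          intervalIntegrable_const fun x _ ↦ (abs_sub_cdf_mem_Icc μ ν x).2
    _ = 1 := by simp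

theorem integral_setIntegral_Ici_eq_integral_cdf_mul (μ : Measure ℝ) [IsFiniteMeasure μ]
    {ν : Measure ℝ} [SFinite ν] {w : ℝ → ℝ} (hw : Integrable w ν) :
    ∫ z, ∫ x in Ici z, w x ∂ν ∂μ = ∫ x, cdf μ x * w x ∂ν := by
  have hind (z x : ℝ) : (Ici z).indicator w x = (Iic x).indicator (fun _ ↦ w x) z := by
    by_cases h : z ≤ x <;> simp [h]
  have hint : Integrable (Function.uncurry fun z x ↦ (Ici z).indicator w x) (μ.prod ν) := by
    have h : Function.uncurry (fun z x ↦ (Ici z).indicator w x)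
        = {p : ℝ × ℝ | p.1 ≤ p.2}.indicator (fun p ↦ w p.2) := by
      ext ⟨z, x⟩; by_cases h : z ≤ x <;> simp [h]
    rw [h]
    exact (hw.comp_snd μ).indicator (measurableSet_le measurable_fst measurable_snd)
  simp_rw [← integral_indicator measurableSet_Ici]
  rw [integral_integral_swap hint]
  simp_rw [hind, integral_indicator_const _ measurableSet_Iic, smul_eq_mul]
  rfl

noncomputable def battaWeight (x : ℝ) : ℝ := x / √(1 - x ^ 2)

theorem hasDerivAt_neg_sqrt_one_sub_sq {x : ℝ} (hx : x ∈ Ioo (-1) 1) :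
    HasDerivAt (fun x ↦ -√(1 - x ^ 2)) (battaWeight x) x := by
  have hpos : 0 < 1 - x ^ 2 := by nlinarith [hx.1, hx.2]
  refine (((hasDerivAt_pow 2 x).const_sub 1).sqrt hpos.ne').fun_neg.congr_deriv ?_
  have := (Real.sqrt_pos.2 hpos).ne'
  simp only [battaWeight]
  field_simp
  ring

theorem battaWeight_nonneg {x : ℝ} (hx : 0 ≤ x) : 0 ≤ battaWeight x :=
  div_nonneg hx (Real.sqrt_nonneg _)

theorem monotoneOn_battaWeight : MonotoneOn battaWeight (Ico 0 1) := by
  intro x hx y hy hxy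
  have hy2 : 0 < 1 - y ^ 2 := by nlinarith [hy.1, hy.2]
  exact div_le_div₀ (hx.1.trans hxy) hxy (Real.sqrt_pos.2 hy2)
    (Real.sqrt_le_sqrt (by nlinarith [hx.1]))

theorem integral_battaWeight {z : ℝ} (hz : z ∈ Icc 0 1) :
    IntervalIntegrable battaWeight volume z 1 ∧ ∫ x in z..1, battaWeight x = √(1 - z ^ 2) := by
  have hcont : ContinuousOn (fun x : ℝ ↦ -√(1 - x ^ 2)) (Icc z 1) := by fun_prop
  have hderiv (x : ℝ) (hx : x ∈ Ioo z 1) :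
      HasDerivAt (fun x ↦ -√(1 - x ^ 2)) (battaWeight x) x :=
    hasDerivAt_neg_sqrt_one_sub_sq ⟨by linarith [hz.1, hx.1], hx.2⟩
  have hint : IntervalIntegrable battaWeight volume z 1 :=
    (intervalIntegrable_iff_integrableOn_Ioc_of_le hz.2).2 <|
      intervalIntegral.integrableOn_deriv_of_nonneg hcont hderiv
        fun x hx ↦ battaWeight_nonneg (hz.1.trans hx.1.le)
  refine ⟨hint, ?_⟩
  rw [intervalIntegral.integral_eq_sub_of_hasDerivAt_of_le hz.2 hcont hderiv hint]
  norm_num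

theorem batta_eq_integral_cdf_mul (μ : Measure ℝ) [IsFiniteMeasure μ] (hμ : μ (Icc 0 1)ᶜ = 0) :
    batta μ = ∫ x in (0 : ℝ)..1, cdf μ x * battaWeight x := by
  have hw : IntegrableOn battaWeight (Icc 0 1) :=
    (integrableOn_Icc_iff_integrableOn_Ioc (by simp)).2 <|
      (intervalIntegrable_iff_integrableOn_Ioc_of_le zero_le_one).1
        (integral_battaWeight ⟨le_rfl, zero_le_one⟩).1
  have hinner : ∀ᵐ z ∂μ, √(1 - z ^ 2) = ∫ x in Ici z ∩ Icc 0 1, battaWeight x := by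
    filter_upwards [mem_ae_iff.2 hμ] with z hz
    rw [← Ici_inter_Iic, ← inter_assoc, Ici_inter_Ici, sup_eq_left.2 hz.1, Ici_inter_Iic,
      integral_Icc_eq_integral_Ioc, ← intervalIntegral.integral_of_le hz.2,
      (integral_battaWeight hz).2]
  simp_rw [← Measure.restrict_restrict measurableSet_Ici] at hinner
  rw [batta, integral_congr_ae hinner, integral_setIntegral_Ici_eq_integral_cdf_mul μ hw,
    integral_Icc_eq_integral_Ioc, intervalIntegral.integral_of_le zero_le_one]

/-- The Wasserstein distance bounds the difference of Battacharyya parameters: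
`|B(μ) - B(ν)| ≤ √d(μ,ν) · √(2 - d(μ,ν))`. -/
theorem wasserstein_bounds_battacharyya (μ ν : Measure ℝ)
    [IsProbabilityMeasure μ] [IsProbabilityMeasure ν]
    (hμ : μ (Set.Icc (0:ℝ) 1)ᶜ = 0) (hν : ν (Set.Icc (0:ℝ) 1)ᶜ = 0) :
    |batta μ - batta ν| ≤ Real.sqrt (W1 μ ν) * Real.sqrt (2 - W1 μ ν) := by
  set d := W1 μ ν
  have hd : d ∈ Icc 0 1 := ⟨W1_nonneg μ ν, W1_le_one μ ν⟩
  have hW : IntervalIntegrable battaWeight volume 0 1 :=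
    (integral_battaWeight ⟨le_rfl, zero_le_one⟩).1
  calc |batta μ - batta ν| = |∫ x in (0 : ℝ)..1, (cdf μ x - cdf ν x) * battaWeight x| := by
        rw [batta_eq_integral_cdf_mul μ hμ, batta_eq_integral_cdf_mul ν hν,
          ← intervalIntegral.integral_sub (hW.cdf_mul μ) (hW.cdf_mul ν)]
        simp_rw [sub_mul]
    _ ≤ ∫ x in (0 : ℝ)..1, |cdf μ x - cdf ν x| * battaWeight x := by
        refine (intervalIntegral.abs_integral_le_integral_abs zero_le_one).trans_eq
          (intervalIntegral.integral_congr fun x hx ↦ ?_)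
        rw [uIcc_of_le zero_le_one] at hx
        simp only [abs_mul, abs_of_nonneg (battaWeight_nonneg hx.1)]
    _ ≤ ∫ x in (1 - d)..1, battaWeight x :=
        integral_mul_le_integral_of_monotoneOn (by linarith [hd.2]) (by linarith [hd.1])
          monotoneOn_battaWeight hW (intervalIntegrable_abs_sub_cdf μ ν 0 1)
          (abs_sub_cdf_mem_Icc μ ν) (sub_sub_cancel 1 d).symm
    _ = √d * √(2 - d) := by
        rw [(integral_battaWeight ⟨by linarith [hd.2], by linarith [hd.1]⟩).2,
          ← Real.sqrt_mul hd.1]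
        ring_nf
end
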